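/- arXiv:2410.16339 — 2 statements merged into one kernel-verified Lean document; each statement's English description precedes it below -/
import Mathlib

section
/- Let μ, ν be probability measures on ℝ with finite first moments and let F(t) = ∫₀ᵗ (Q_μ(α) − Q_ν(α)) dα where Q_μ, Q_ν are the quantile functions. Then μ ≤_cx ν (μ is dominated by ν in convex order) if and only if F(t) ≥ 0 for all t ∈ [0,1] and F(1) = 0. -/
/-!
Under Lebesgue measure on `(0, 1)` the quantile function `Q_μ` has law `μ`, so both sides of
the equivalence are statements about `Q_μ` and `Q_ν`.

Testing the convex order with `± x` gives `F 1 = 0`, and testing it with the put payoff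
`(k - x)⁺` at the strike `k = Q_ν t` gives `F t ≥ 0`.

Conversely, let `f` be convex with right derivative `f'`. Then
`f (Q_ν) ≥ f (Q_μ) + f' (Q_μ) (Q_ν - Q_μ)`, and `S = f' ∘ Q_μ` is nondecreasing.
Abel summation gives `∫ S (Q_μ - Q_ν) = -∫ F dS ≤ 0`. The formula is applied to the bounded `S`
obtained by replacing `f` outside `[-n, n]` with its tangent lines. These truncations increase
to `f`, so monotone convergence gives the result for `f`.
-/

open MeasureTheory Set

/-- The quantile (generalized inverse CDF) function of a measure on `ℝ`:
`Q_μ(α) = inf { x : μ((-∞, x]) ≥ α }`. -/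
noncomputable def quantileFn (μ : Measure ℝ) (α : ℝ) : ℝ :=
  sInf {x : ℝ | ENNReal.ofReal α ≤ μ (Iic x)}

open ProbabilityTheory Filter Topology

section Quantile

variable {μ : Measure ℝ} {α x : ℝ}

lemma bddBelow_setOf_le_cdf (hα : 0 < α) : BddBelow {x | α ≤ cdf μ x} := by
  obtain ⟨x₀, hx₀⟩ := ((tendsto_cdf_atBot μ).eventually (eventually_lt_nhds hα)).exists
  exact ⟨x₀, fun x hx =>
    le_of_not_gt fun hlt => (hx.trans (monotone_cdf μ hlt.le)).not_gt hx₀⟩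

lemma nonempty_setOf_le_cdf (hα : α < 1) : {x | α ≤ cdf μ x}.Nonempty :=
  ((tendsto_cdf_atTop μ).eventually (eventually_ge_nhds hα)).exists

variable [IsProbabilityMeasure μ]

lemma quantileFn_eq_sInf_cdf : quantileFn μ α = sInf {x | α ≤ cdf μ x} := by
  simp only [quantileFn, ← ofReal_cdf μ, ENNReal.ofReal_le_ofReal_iff (cdf_nonneg μ _)]

lemma le_cdf_quantileFn (hα : α ∈ Ioo 0 1) : α ≤ cdf μ (quantileFn μ α) := by
  rw [quantileFn_eq_sInf_cdf]
  have hbdd := bddBelow_setOf_le_cdf (μ := μ) hα.1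
  have hne := nonempty_setOf_le_cdf (μ := μ) hα.2
  refine ge_of_tendsto (((cdf μ).right_continuous _).mono Ioi_subset_Ici_self).tendsto ?_
  filter_upwards [self_mem_nhdsWithin] with y hy
  obtain ⟨z, hz, hzy⟩ := (csInf_lt_iff hbdd hne).1 hy
  exact hz.trans (monotone_cdf μ hzy.le)

lemma quantileFn_le_iff (hα : α ∈ Ioo 0 1) : quantileFn μ α ≤ x ↔ α ≤ cdf μ x := by
  refine ⟨fun h => (le_cdf_quantileFn hα).trans (monotone_cdf μ h), fun h => ?_⟩
  rw [quantileFn_eq_sInf_cdf]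
  exact csInf_le (bddBelow_setOf_le_cdf hα.1) h

lemma monotoneOn_quantileFn : MonotoneOn (quantileFn μ) (Ioo 0 1) := fun _ hα _ hβ hαβ =>
  (quantileFn_le_iff hα).2 (hαβ.trans (le_cdf_quantileFn hβ))

lemma aemeasurable_quantileFn : AEMeasurable (quantileFn μ) (volume.restrict (Ioo 0 1)) :=
  aemeasurable_restrict_of_monotoneOn measurableSet_Ioo monotoneOn_quantileFn

theorem map_quantileFn : (volume.restrict (Ioo 0 1)).map (quantileFn μ) = μ := by
  refine Measure.ext_of_Iic _ _ fun x => ?_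
  rw [Measure.map_apply_of_aemeasurable aemeasurable_quantileFn measurableSet_Iic,
    Measure.restrict_apply' measurableSet_Ioo, ← ofReal_cdf]
  have hpre : quantileFn μ ⁻¹' Iic x ∩ Ioo 0 1 = Iic (cdf μ x) ∩ Ioo 0 1 := by
    ext α
    simp only [mem_inter_iff, mem_preimage, mem_Iic, and_congr_left_iff]
    exact quantileFn_le_iff
  rw [hpre]
  refine le_antisymm ?_ ?_
  · calc volume (Iic (cdf μ x) ∩ Ioo 0 1) ≤ volume (Ioc 0 (cdf μ x)) :=
          measure_mono fun α hα => ⟨hα.2.1, hα.1⟩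
      _ = ENNReal.ofReal (cdf μ x) := by simp
  · calc ENNReal.ofReal (cdf μ x) = volume (Ioo 0 (cdf μ x)) := by simp
      _ ≤ volume (Iic (cdf μ x) ∩ Ioo 0 1) :=
          measure_mono fun α hα => ⟨hα.2.le, hα.1, hα.2.trans_le (cdf_le_one μ x)⟩

variable {E : Type*} [NormedAddCommGroup E] {g : ℝ → E}

theorem integrableOn_comp_quantileFn_iff (hg : AEStronglyMeasurable g μ) :
    IntegrableOn (fun α => g (quantileFn μ α)) (Ioo 0 1) ↔ Integrable g μ := by
  rw [← map_quantileFn (μ := μ)] at hg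
  have h := integrable_map_measure hg aemeasurable_quantileFn
  rw [map_quantileFn] at h
  exact h.symm

theorem integral_comp_quantileFn [NormedSpace ℝ E] (hg : AEStronglyMeasurable g μ) :
    ∫ α in Ioo 0 1, g (quantileFn μ α) = ∫ x, g x ∂μ := by
  rw [← map_quantileFn (μ := μ)] at hg
  rw [← integral_map aemeasurable_quantileFn hg, map_quantileFn]

end Quantile

section Convex

variable {f : ℝ → ℝ}

lemma ConvexOn.monotone_rightDeriv (hf : ConvexOn ℝ univ f) :
    Monotone fun x => derivWithin f (Ioi x) x := by
  simpa only [interior_univ, monotoneOn_univ] using hf.monotoneOn_rightDeriv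

lemma ConvexOn.add_rightDeriv_mul_sub_le (hf : ConvexOn ℝ univ f) (x y : ℝ) :
    f x + derivWithin f (Ioi x) x * (y - x) ≤ f y := by
  rcases lt_trichotomy x y with hxy | rfl | hyx
  · have h := hf.rightDeriv_le_slope_of_mem_interior (by simp) (mem_univ y) hxy
    rw [slope_def_field, le_div_iff₀ (sub_pos.2 hxy)] at h
    linarith
  · simp
  · have h := (hf.slope_le_leftDeriv_of_mem_interior (mem_univ y) (by simp) hyx).trans
      (hf.leftDeriv_le_rightDeriv_of_mem_interior (by simp))
    rw [slope_def_field, div_le_iff₀ (sub_pos.2 hyx)] at h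
    linarith

end Convex

section TangentTrunc

variable {f : ℝ → ℝ} {A x : ℝ}

def clampAbs (A x : ℝ) : ℝ := max (-A) (min x A)

lemma clampAbs_mem (hA : 0 ≤ A) (x : ℝ) : clampAbs A x ∈ Icc (-A) A :=
  ⟨le_max_left _ _, max_le (by linarith) (min_le_right _ _)⟩

lemma clampAbs_of_mem (hx : x ∈ Icc (-A) A) : clampAbs A x = x := by
  rw [clampAbs, min_eq_left hx.2, max_eq_right hx.1]

lemma clampAbs_of_le (hx : x ≤ -A) : clampAbs A x = -A :=
  max_eq_left ((min_le_left _ _).trans hx)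

lemma clampAbs_of_ge (hA : 0 ≤ A) (hx : A ≤ x) : clampAbs A x = A := by
  rw [clampAbs, min_eq_right hx, max_eq_right (by linarith)]

lemma monotone_clampAbs (A : ℝ) : Monotone (clampAbs A) := fun _ _ h =>
  max_le_max le_rfl (min_le_min h le_rfl)

noncomputable def tangentTrunc (f : ℝ → ℝ) (A x : ℝ) : ℝ :=
  f (clampAbs A x) + derivWithin f (Ioi (clampAbs A x)) (clampAbs A x) * (x - clampAbs A x)

noncomputable def tangentTruncSlope (f : ℝ → ℝ) (A x : ℝ) : ℝ :=
  derivWithin f (Ioi (clampAbs A x)) (clampAbs A x)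

lemma tangent_le_tangentTrunc (hf : ConvexOn ℝ univ f) (hA : 0 ≤ A) {t : ℝ} (ht : t ∈ Icc (-A) A)
    (x : ℝ) :
    f t + derivWithin f (Ioi t) t * (x - t) ≤ tangentTrunc f A x := by
  set c := clampAbs A x
  have hsub := hf.add_rightDeriv_mul_sub_le t c
  have hslope : derivWithin f (Ioi t) t * (x - c) ≤ derivWithin f (Ioi c) c * (x - c) := by
    rcases le_or_gt x (-A) with hx | hx
    · have hc : c = -A := clampAbs_of_le hx
      exact mul_le_mul_of_nonpos_right (hf.monotone_rightDeriv (hc ▸ ht.1)) (by linarith)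
    rcases le_or_gt x A with hx' | hx'
    · simp [c, clampAbs_of_mem ⟨hx.le, hx'⟩]
    · have hc : c = A := clampAbs_of_ge hA hx'.le
      exact mul_le_mul_of_nonneg_right (hf.monotone_rightDeriv (hc ▸ ht.2)) (by linarith)
  rw [tangentTrunc]
  linarith

lemma tangentTrunc_add_slope_mul_sub_le (hf : ConvexOn ℝ univ f) (hA : 0 ≤ A) (x y : ℝ) :
    tangentTrunc f A x + tangentTruncSlope f A x * (y - x) ≤ tangentTrunc f A y := by
  have h := tangent_le_tangentTrunc hf hA (clampAbs_mem hA x) y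
  unfold tangentTrunc at h
  unfold tangentTrunc tangentTruncSlope
  linarith

lemma tangentTrunc_mono (hf : ConvexOn ℝ univ f) {B : ℝ} (hA : 0 ≤ A) (hAB : A ≤ B) (x : ℝ) :
    tangentTrunc f A x ≤ tangentTrunc f B x := by
  have hc := clampAbs_mem hA x
  exact tangent_le_tangentTrunc hf (hA.trans hAB) ⟨by linarith [hc.1], hc.2.trans hAB⟩ x

lemma tangentTrunc_of_mem (hx : x ∈ Icc (-A) A) : tangentTrunc f A x = f x := by
  simp [tangentTrunc, clampAbs_of_mem hx]

lemma monotone_tangentTruncSlope (hf : ConvexOn ℝ univ f) : Monotone (tangentTruncSlope f A) :=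
  hf.monotone_rightDeriv.comp (monotone_clampAbs A)

lemma abs_tangentTruncSlope_le (hf : ConvexOn ℝ univ f) (hA : 0 ≤ A) (x : ℝ) :
    |tangentTruncSlope f A x| ≤ max |derivWithin f (Ioi (-A)) (-A)| |derivWithin f (Ioi A) A| :=
  abs_le_max_abs_abs (hf.monotone_rightDeriv (clampAbs_mem hA x).1)
    (hf.monotone_rightDeriv (clampAbs_mem hA x).2)

lemma lipschitzWith_tangentTrunc (hf : ConvexOn ℝ univ f) (hA : 0 ≤ A) :
    LipschitzWith (max |derivWithin f (Ioi (-A)) (-A)| |derivWithin f (Ioi A) A|).toNNReal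
      (tangentTrunc f A) := by
  refine LipschitzWith.of_le_add_mul' _ fun x y => ?_
  have h := tangentTrunc_add_slope_mul_sub_le hf hA x y
  have hs : -(tangentTruncSlope f A x * (y - x)) ≤
      max |derivWithin f (Ioi (-A)) (-A)| |derivWithin f (Ioi A) A| * dist x y := by
    rw [Real.dist_eq, abs_sub_comm]
    refine (neg_le_abs _).trans ?_
    rw [abs_mul]
    exact mul_le_mul_of_nonneg_right (abs_tangentTruncSlope_le hf hA x) (abs_nonneg _)
  linarith

end TangentTrunc

section Integrability

variable {β : Type*} [MeasurableSpace β] {P : Measure β} [IsFiniteMeasure P]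

lemma LipschitzWith.integrable_comp {E F : Type*} [NormedAddCommGroup E] [NormedAddCommGroup F]
    {K : NNReal} {φ : E → F} (hφ : LipschitzWith K φ) {g : β → E} (hg : Integrable g P) :
    Integrable (fun b => φ (g b)) P := by
  refine Integrable.mono' ((integrable_const ‖φ 0‖).add (hg.norm.const_mul K))
    (hφ.continuous.comp_aestronglyMeasurable hg.1) (ae_of_all _ fun b => ?_)
  calc ‖φ (g b)‖ ≤ ‖φ 0‖ + dist (φ (g b)) (φ 0) := by
        rw [dist_eq_norm]; exact norm_le_norm_add_norm_sub' _ _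
    _ ≤ ‖φ 0‖ + K * ‖g b‖ := by
        have := hφ.dist_le_mul (g b) 0
        rw [dist_zero_right] at this
        linarith

variable {f : ℝ → ℝ}

theorem tendsto_integral_tangentTrunc_comp (hf : ConvexOn ℝ univ f) {g : β → ℝ}
    (hg : Integrable g P) (hfg : Integrable (fun b => f (g b)) P) :
    Tendsto (fun n : ℕ => ∫ b, tangentTrunc f n (g b) ∂P) atTop (𝓝 (∫ b, f (g b) ∂P)) := by
  refine integral_tendsto_of_tendsto_of_monotone
    (fun n => (lipschitzWith_tangentTrunc hf n.cast_nonneg).integrable_comp hg) hfg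
    (ae_of_all _ fun b m n hmn => tangentTrunc_mono hf m.cast_nonneg (by exact_mod_cast hmn) _)
    (ae_of_all _ fun b => tendsto_atTop_of_eventually_const (i₀ := ⌈|g b|⌉₊) fun n hn => ?_)
  refine tangentTrunc_of_mem (abs_le.1 ((Nat.le_ceil _).trans ?_))
  exact_mod_cast hn

end Integrability

section Abel

variable {S h : ℝ → ℝ}

lemma MonotoneOn.exists_lt_iff_lt_of_ne (hS : MonotoneOn S (Ioo 0 1)) (l : ℝ) :
    ∃ u ∈ Icc (0 : ℝ) 1, ∀ α ∈ Ioo (0 : ℝ) 1, α ≠ u → (S α < l ↔ α < u) := by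
  set U := insert 0 {α ∈ Ioo (0 : ℝ) 1 | S α < l}
  have hU1 : ∀ β ∈ U, β ≤ 1 := by
    rintro β (rfl | hβ)
    · exact zero_le_one
    · exact hβ.1.2.le
  have hbdd : BddAbove U := ⟨1, hU1⟩
  refine ⟨sSup U, ⟨le_csSup hbdd (mem_insert _ _), csSup_le (insert_nonempty _ _) hU1⟩,
    fun α hα hne => ⟨fun hSα => ?_, fun hαu => ?_⟩⟩
  · exact lt_of_le_of_ne (le_csSup hbdd (Or.inr ⟨hα, hSα⟩)) hne
  · obtain ⟨β, hβ, hαβ⟩ := exists_lt_of_lt_csSup (insert_nonempty _ _) hαu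
    rcases hβ with rfl | ⟨hβ, hSβ⟩
    · exact absurd hα.1 hαβ.not_gt
    · exact (hS hα hβ hαβ.le).trans_lt hSβ

lemma integral_indicator_sublevel_nonneg (hS : MonotoneOn S (Ioo 0 1))
    (hH : ∀ t ∈ Icc (0 : ℝ) 1, 0 ≤ ∫ α in Ioc 0 t, h α) (l : ℝ) :
    0 ≤ ∫ α in Ioo (0 : ℝ) 1, {α | S α < l}.indicator h α := by
  obtain ⟨u, hu, hSu⟩ := hS.exists_lt_iff_lt_of_ne l
  have hae : {α | S α < l}.indicator h =ᵐ[volume.restrict (Ioo 0 1)] (Iio u).indicator h := by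
    filter_upwards [ae_restrict_mem measurableSet_Ioo,
      ae_restrict_of_ae ((countable_singleton u).ae_notMem volume)] with α hα hαu
    simp only [indicator_apply, mem_ofPred_eq, mem_Iio, hSu α hα hαu]
  rw [integral_congr_ae hae, integral_indicator measurableSet_Iio,
    Measure.restrict_restrict measurableSet_Iio, Iio_inter_Ioo, min_eq_left hu.2,
    ← integral_Ioc_eq_integral_Ioo]
  exact hH u hu

lemma integral_indicator_Ioi_const {C s : ℝ} (hs : s ∈ Icc (-C) C) (c : ℝ) :
    ∫ l in Ioo (-C) C, (Ioi s).indicator (fun _ => c) l = (C - s) * c := by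
  rw [integral_indicator measurableSet_Ioi, Measure.restrict_restrict measurableSet_Ioi,
    Ioi_inter_Ioo, max_eq_left hs.1, setIntegral_const, Real.volume_real_Ioo_of_le hs.2,
    smul_eq_mul]

/-- Abel summation in integral form: `∫ S h = -∫ (∫₀ᵗ h) dS(t)`. -/
theorem integral_mul_nonpos_of_monotoneOn {C : ℝ} (hS : MonotoneOn S (Ioo 0 1))
    (hC : ∀ α ∈ Ioo (0 : ℝ) 1, |S α| ≤ C) (hh : IntegrableOn h (Ioo 0 1))
    (hH : ∀ t ∈ Icc (0 : ℝ) 1, 0 ≤ ∫ α in Ioc 0 t, h α)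
    (hH1 : ∫ α in Ioc (0 : ℝ) 1, h α = 0) :
    ∫ α in Ioo (0 : ℝ) 1, S α * h α ≤ 0 := by
  set P := volume.restrict (Ioo (0 : ℝ) 1)
  set L := volume.restrict (Ioo (-C) C)
  have hSm : AEMeasurable S P := aemeasurable_restrict_of_monotoneOn measurableSet_Ioo hS
  have hSC : ∀ᵐ α ∂P, |S α| ≤ C := (ae_restrict_mem measurableSet_Ioo).mono hC
  obtain ⟨S', hS'm, hSS'⟩ := id hSm
  obtain ⟨h', hh'm, hhh'⟩ := id hh.1
  -- Integrating `G (α, l) = 1[S α < l] h α` over `l ∈ (-C, C)` gives `(C - S α) h α`;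
  -- integrating it over `α` gives a prefix integral of `h`.
  set G : ℝ × ℝ → ℝ := {p | S' p.1 < p.2}.indicator fun p => h' p.1
  have hG : Integrable G (P.prod L) := by
    refine Integrable.mono' ((hh.congr hhh').norm.comp_fst L)
      ((hh'm.comp_measurable measurable_fst).indicator
        (measurableSet_lt (hS'm.comp measurable_fst) measurable_snd)).aestronglyMeasurable
      (ae_of_all _ fun p => norm_indicator_le_norm_self _ _)
  have hG_l : ∀ᵐ α ∂P, ∫ l, G (α, l) ∂L = (C - S α) * h α := by
    filter_upwards [hSS', hhh', hSC] with α hSα hhα hα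
    change ∫ l, (Ioi (S' α)).indicator (fun _ => h' α) l ∂L = _
    rw [← hSα, ← hhα]
    exact integral_indicator_Ioi_const (abs_le.1 hα) _
  have hG_α : ∀ l, 0 ≤ ∫ α, G (α, l) ∂P := fun l => by
    have hae : (fun α => G (α, l)) =ᵐ[P] {α | S α < l}.indicator h := by
      filter_upwards [hSS', hhh'] with α hSα hhα
      simp only [G, indicator_apply, mem_ofPred_eq, hSα, hhα]
    rw [integral_congr_ae hae]
    exact integral_indicator_sublevel_nonneg hS hH l
  have hSh : Integrable (fun α => S α * h α) P := hh.bdd_mul hSm.aestronglyMeasurable hSC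
  have hint : ∫ α, h α ∂P = 0 := by rw [← integral_Ioc_eq_integral_Ioo]; exact hH1
  calc ∫ α in Ioo (0 : ℝ) 1, S α * h α = -∫ α, (C - S α) * h α ∂P := by
        simp only [sub_mul]
        rw [integral_sub (hh.const_mul C) hSh, integral_const_mul, hint]
        ring
    _ = -∫ l, ∫ α, G (α, l) ∂P ∂L := by
        rw [← integral_integral_swap (f := fun α l => G (α, l)) hG, integral_congr_ae hG_l]
    _ ≤ 0 := neg_nonpos.2 (integral_nonneg hG_α)

end Abel

section QuantileComparison

variable {q r f : ℝ → ℝ}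

lemma integral_tangentTrunc_comp_le (hf : ConvexOn ℝ univ f) {A : ℝ} (hA : 0 ≤ A)
    (hq : MonotoneOn q (Ioo 0 1)) (hqi : IntegrableOn q (Ioo 0 1))
    (hri : IntegrableOn r (Ioo 0 1))
    (hF : ∀ t ∈ Icc (0 : ℝ) 1, 0 ≤ ∫ α in Ioc 0 t, (q α - r α))
    (hF1 : ∫ α in Ioc (0 : ℝ) 1, (q α - r α) = 0) :
    ∫ α in Ioo (0 : ℝ) 1, tangentTrunc f A (q α) ≤
      ∫ α in Ioo (0 : ℝ) 1, tangentTrunc f A (r α) := by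
  set S := fun α => tangentTruncSlope f A (q α)
  have hS : MonotoneOn S (Ioo 0 1) := fun α hα β hβ hαβ =>
    monotone_tangentTruncSlope hf (hq hα hβ hαβ)
  have hSC : ∀ α, |S α| ≤ max |derivWithin f (Ioi (-A)) (-A)| |derivWithin f (Ioi A) A| :=
    fun α => abs_tangentTruncSlope_le hf hA (q α)
  have hSh : IntegrableOn (fun α => S α * (q α - r α)) (Ioo 0 1) :=
    (hqi.sub hri).bdd_mul
      (aemeasurable_restrict_of_monotoneOn measurableSet_Ioo hS).aestronglyMeasurable
      (ae_of_all _ hSC)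
  have hlip := lipschitzWith_tangentTrunc hf hA
  calc ∫ α in Ioo (0 : ℝ) 1, tangentTrunc f A (q α)
      ≤ ∫ α in Ioo (0 : ℝ) 1, (tangentTrunc f A (r α) + S α * (q α - r α)) := by
        refine integral_mono (hlip.integrable_comp hqi) ((hlip.integrable_comp hri).add hSh)
          fun α => ?_
        linarith [tangentTrunc_add_slope_mul_sub_le hf hA (q α) (r α)]
    _ = (∫ α in Ioo (0 : ℝ) 1, tangentTrunc f A (r α)) +
          ∫ α in Ioo (0 : ℝ) 1, S α * (q α - r α) :=
        integral_add (hlip.integrable_comp hri) hSh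
    _ ≤ ∫ α in Ioo (0 : ℝ) 1, tangentTrunc f A (r α) :=
        add_le_of_nonpos_right (integral_mul_nonpos_of_monotoneOn hS (fun α _ => hSC α)
          (hqi.sub hri) hF hF1)

theorem integral_comp_le_of_prefix_integral_nonneg (hf : ConvexOn ℝ univ f)
    (hq : MonotoneOn q (Ioo 0 1)) (hqi : IntegrableOn q (Ioo 0 1))
    (hri : IntegrableOn r (Ioo 0 1))
    (hfq : IntegrableOn (fun α => f (q α)) (Ioo 0 1))
    (hfr : IntegrableOn (fun α => f (r α)) (Ioo 0 1))
    (hF : ∀ t ∈ Icc (0 : ℝ) 1, 0 ≤ ∫ α in Ioc 0 t, (q α - r α))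
    (hF1 : ∫ α in Ioc (0 : ℝ) 1, (q α - r α) = 0) :
    ∫ α in Ioo (0 : ℝ) 1, f (q α) ≤ ∫ α in Ioo (0 : ℝ) 1, f (r α) :=
  le_of_tendsto_of_tendsto' (tendsto_integral_tangentTrunc_comp hf hqi hfq)
    (tendsto_integral_tangentTrunc_comp hf hri hfr) fun n =>
      integral_tangentTrunc_comp_le hf n.cast_nonneg hq hqi hri hF hF1

theorem prefix_integral_nonneg_of_put_le (hr : MonotoneOn r (Ioo 0 1))
    (hqi : IntegrableOn q (Ioo 0 1)) (hri : IntegrableOn r (Ioo 0 1))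
    (hput : ∀ k, ∫ α in Ioo (0 : ℝ) 1, max (k - q α) 0 ≤ ∫ α in Ioo (0 : ℝ) 1, max (k - r α) 0)
    (hF1 : ∫ α in Ioc (0 : ℝ) 1, (q α - r α) = 0) {t : ℝ} (ht : t ∈ Icc (0 : ℝ) 1) :
    0 ≤ ∫ α in Ioc 0 t, (q α - r α) := by
  obtain ⟨ht0, ht1⟩ := ht
  rcases ht0.eq_or_lt with rfl | ht0
  · simp
  rcases ht1.eq_or_lt with rfl | ht1
  · exact hF1.ge
  have ht : t ∈ Ioo 0 1 := ⟨ht0, ht1⟩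
  -- The put with strike `k = r t` is exercised under `r` exactly on `(0, t]`.
  set k := r t
  have hsub : Ioc 0 t ⊆ Ioo (0 : ℝ) 1 := Ioc_subset_Ioo_right ht.2
  have hqk : IntegrableOn (fun α => k - q α) (Ioo 0 1) := (integrable_const k).sub hqi
  have hrk : IntegrableOn (fun α => k - r α) (Ioo 0 1) := (integrable_const k).sub hri
  have hqk' : IntegrableOn (fun α => max (k - q α) 0) (Ioo 0 1) := hqk.pos_part
  have hput_t : ∫ α in Ioc 0 t, (k - q α) ≤ ∫ α in Ioc 0 t, (k - r α) :=
    calc ∫ α in Ioc 0 t, (k - q α) ≤ ∫ α in Ioc 0 t, max (k - q α) 0 :=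
          setIntegral_mono_on (hqk.mono_set hsub) (hqk'.mono_set hsub) measurableSet_Ioc
            fun α _ => le_max_left _ _
      _ ≤ ∫ α in Ioo (0 : ℝ) 1, max (k - q α) 0 :=
          setIntegral_mono_set hqk' (ae_of_all _ fun α => le_max_right _ _)
            hsub.eventuallyLE
      _ ≤ ∫ α in Ioo (0 : ℝ) 1, max (k - r α) 0 := hput k
      _ = ∫ α in Ioc 0 t, max (k - r α) 0 :=
          setIntegral_eq_of_subset_of_forall_sdiff_eq_zero measurableSet_Ioo hsub
            fun α hα => max_eq_right (sub_nonpos.2 (hr ht hα.1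
              (le_of_lt (not_and.1 hα.2 hα.1.1 |> not_le.1))))
      _ = ∫ α in Ioc 0 t, (k - r α) :=
          setIntegral_congr_fun measurableSet_Ioc fun α hα =>
            max_eq_left (sub_nonneg.2 (hr (hsub hα) ht hα.2))
  have hdiff : ∫ α in Ioc 0 t, (q α - r α) =
      (∫ α in Ioc 0 t, (k - r α)) - ∫ α in Ioc 0 t, (k - q α) := by
    rw [← integral_sub (hrk.mono_set hsub) (hqk.mono_set hsub)]
    congr 1 with α
    ring
  linarith

end QuantileComparison

/-- Let `μ, ν` be probability measures on `ℝ` with finite first moments and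
`F(t) = ∫₀ᵗ (Q_μ(α) − Q_ν(α)) dα`.  Then `μ ≤_cx ν` (convex order: `∫ f dμ ≤ ∫ f dν`
for every convex `f` with both integrals defined) if and only if `F(t) ≥ 0` for all
`t ∈ [0,1]` and `F(1) = 0`. -/
theorem stmt6 (μ ν : Measure ℝ) [IsProbabilityMeasure μ] [IsProbabilityMeasure ν]
    (hμ : Integrable (fun x => x) μ) (hν : Integrable (fun x => x) ν) :
    (∀ f : ℝ → ℝ, ConvexOn ℝ univ f → Integrable f μ → Integrable f ν →
        ∫ x, f x ∂μ ≤ ∫ x, f x ∂ν)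
      ↔ ((∀ t ∈ Icc (0 : ℝ) 1,
            0 ≤ ∫ α in Ioc (0 : ℝ) t, (quantileFn μ α - quantileFn ν α)) ∧
          (∫ α in Ioc (0 : ℝ) 1, (quantileFn μ α - quantileFn ν α)) = 0) := by
  have hQμ : IntegrableOn (quantileFn μ) (Ioo 0 1) :=
    (integrableOn_comp_quantileFn_iff aestronglyMeasurable_id).2 hμ
  have hQν : IntegrableOn (quantileFn ν) (Ioo 0 1) :=
    (integrableOn_comp_quantileFn_iff aestronglyMeasurable_id).2 hν
  constructor
  · intro hcx
    have hmean : ∫ x, x ∂μ = ∫ x, x ∂ν := by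
      have hneg := hcx (fun x => -x) (concaveOn_id convex_univ).neg hμ.neg hν.neg
      rw [integral_neg, integral_neg, neg_le_neg_iff] at hneg
      exact le_antisymm (hcx _ (convexOn_id convex_univ) hμ hν) hneg
    have hF1 : ∫ α in Ioc (0 : ℝ) 1, (quantileFn μ α - quantileFn ν α) = 0 := by
      rw [integral_Ioc_eq_integral_Ioo, integral_sub hQμ hQν, sub_eq_zero]
      exact (integral_comp_quantileFn (g := fun x => x) aestronglyMeasurable_id).trans
        (hmean.trans (integral_comp_quantileFn aestronglyMeasurable_id).symm)
    refine ⟨fun t ht => prefix_integral_nonneg_of_put_le monotoneOn_quantileFn hQμ hQν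
      (fun k => ?_) hF1 ht, hF1⟩
    have hput : Continuous fun x : ℝ => max (k - x) 0 := by fun_prop
    rw [integral_comp_quantileFn hput.aestronglyMeasurable,
      integral_comp_quantileFn hput.aestronglyMeasurable]
    exact hcx _ (((convexOn_const k convex_univ).sub (concaveOn_id convex_univ)).sup
      (convexOn_const 0 convex_univ)) ((integrable_const k).sub hμ).pos_part
      ((integrable_const k).sub hν).pos_part
  · rintro ⟨hF, hF1⟩ f hf hfμ hfν
    have hfm : ∀ {ρ : Measure ℝ}, AEStronglyMeasurable f ρ :=
      (continuousOn_univ.1 (hf.continuousOn isOpen_univ)).aestronglyMeasurable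
    rw [← integral_comp_quantileFn hfm, ← integral_comp_quantileFn hfm]
    exact integral_comp_le_of_prefix_integral_nonneg hf monotoneOn_quantileFn hQμ hQν
      ((integrableOn_comp_quantileFn_iff hfm).2 hfμ)
      ((integrableOn_comp_quantileFn_iff hfm).2 hfν) hF hF1
end

section
/- For any probability measures μ, ν on ℝ with finite second moments, the minimal value of E[(X−Y)²] over all couplings of (μ,ν) equals ∫₀¹ (Q_μ(α) − Q_ν(α))² dα, where Q_μ, Q_ν are the quantile functions (one-dimensional optimal transport with quadratic cost is achieved by the comonotone coupling). -/
/-!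
Expanding the square, `E (X - Y)² = E X² + E Y² - 2 E XY`, so over couplings of `μ` and `ν` one
has to maximise `E XY`. By Hoeffding's identity `XY = ∫∫ k(s, X) k(t, Y) ds dt` with
`k(s, x) = 1{x ≤ s} - 1{0 ≤ s}`, and `E k(s, X) k(t, Y)` is `P(X ≤ s, Y ≤ t)` plus terms depending
only on the marginals. The Fréchet bound `P(X ≤ s, Y ≤ t) ≤ min (F_μ s) (F_ν t)` is attained by the
comonotone coupling `(Q_μ U, Q_ν U)`, since `Q_μ α ≤ x ↔ α ≤ F_μ x` for `α ∈ (0, 1)`.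
-/

open MeasureTheory Set

open Filter ProbabilityTheory

namespace QuantileCoupling

section Quantile

lemma volume_Iic_inter_Ioo {c : ℝ} (hc : c ≤ 1) :
    volume (Iic c ∩ Ioo 0 1) = ENNReal.ofReal c := by
  have : Iic c ∩ Icc 0 1 = Icc 0 c := by
    ext α
    simp only [mem_inter_iff, mem_Iic, mem_Icc]
    exact ⟨fun h => ⟨h.2.1, h.1⟩, fun h => ⟨h.2, h.1, h.2.trans hc⟩⟩
  rw [measure_congr ((ae_eq_refl (Iic c)).inter Ioo_ae_eq_Icc), this, Real.volume_Icc, sub_zero]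

variable {μ : Measure ℝ} [IsProbabilityMeasure μ]

lemma quantileFn_eq_sInf_cdf (α : ℝ) : quantileFn μ α = sInf {x | α ≤ cdf μ x} := by
  simp_rw [quantileFn, ← ofReal_cdf, ENNReal.ofReal_le_ofReal_iff (cdf_nonneg μ _)]

lemma quantileFn_le_iff {α x : ℝ} (hα : α ∈ Ioo 0 1) : quantileFn μ α ≤ x ↔ α ≤ cdf μ x := by
  have hne : {x | α ≤ cdf μ x}.Nonempty :=
    ((tendsto_cdf_atTop μ).eventually (eventually_ge_nhds hα.2)).exists
  have hbdd : BddBelow {x | α ≤ cdf μ x} := by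
    obtain ⟨b, hb⟩ :=
      ((tendsto_cdf_atBot μ).eventually (eventually_lt_nhds hα.1)).exists_forall_of_atBot
    exact ⟨b, fun y hy => le_of_not_ge fun hyb => (hb y hyb).not_ge hy⟩
  rw [quantileFn_eq_sInf_cdf]
  refine ⟨fun h => le_trans ?_ (monotone_cdf μ h), fun h => csInf_le hbdd h⟩
  -- the infimum belongs to the set by right-continuity of the cdf
  refine ge_of_tendsto (((cdf μ).right_continuous _).mono Ioi_subset_Ici_self) ?_
  filter_upwards [self_mem_nhdsWithin] with y hy
  obtain ⟨z, hz, hzy⟩ := exists_lt_of_csInf_lt hne hy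
  exact hz.trans (monotone_cdf μ hzy.le)

lemma monotoneOn_quantileFn : MonotoneOn (quantileFn μ) (Ioo 0 1) := fun _ ha _ hb hab =>
  (quantileFn_le_iff ha).2 (hab.trans ((quantileFn_le_iff hb).1 le_rfl))

lemma aemeasurable_quantileFn : AEMeasurable (quantileFn μ) (volume.restrict (Ioo 0 1)) :=
  aemeasurable_restrict_of_monotoneOn measurableSet_Ioo monotoneOn_quantileFn

lemma quantileFn_preimage_Iic_inter_Ioo (x : ℝ) :
    quantileFn μ ⁻¹' Iic x ∩ Ioo 0 1 = Iic (cdf μ x) ∩ Ioo 0 1 := by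
  ext α
  simp only [mem_inter_iff, mem_preimage, mem_Iic, and_congr_left_iff]
  exact quantileFn_le_iff

lemma map_quantileFn : (volume.restrict (Ioo 0 1)).map (quantileFn μ) = μ := by
  refine Measure.ext_of_Iic _ _ fun x => ?_
  rw [Measure.map_apply_of_aemeasurable aemeasurable_quantileFn measurableSet_Iic,
    Measure.restrict_apply' measurableSet_Ioo, quantileFn_preimage_Iic_inter_Ioo,
    volume_Iic_inter_Ioo (cdf_le_one μ x), ofReal_cdf]

end Quantile

section Comonotone

instance : IsProbabilityMeasure (volume.restrict (Ioo (0 : ℝ) 1)) :=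
  ⟨by simp [Real.volume_Ioo]⟩

noncomputable def comonotoneCoupling (μ ν : Measure ℝ) : Measure (ℝ × ℝ) :=
  (volume.restrict (Ioo 0 1)).map fun α => (quantileFn μ α, quantileFn ν α)

variable {μ ν : Measure ℝ} [IsProbabilityMeasure μ] [IsProbabilityMeasure ν]

lemma aemeasurable_quantileFn_prod :
    AEMeasurable (fun α => (quantileFn μ α, quantileFn ν α)) (volume.restrict (Ioo 0 1)) :=
  aemeasurable_quantileFn.prodMk aemeasurable_quantileFn

instance : IsProbabilityMeasure (comonotoneCoupling μ ν) :=
  Measure.isProbabilityMeasure_map aemeasurable_quantileFn_prod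

lemma comonotoneCoupling_map_fst : (comonotoneCoupling μ ν).map Prod.fst = μ := by
  rw [comonotoneCoupling, AEMeasurable.map_map_of_aemeasurable measurable_fst.aemeasurable
    aemeasurable_quantileFn_prod]
  exact map_quantileFn

lemma comonotoneCoupling_map_snd : (comonotoneCoupling μ ν).map Prod.snd = ν := by
  rw [comonotoneCoupling, AEMeasurable.map_map_of_aemeasurable measurable_snd.aemeasurable
    aemeasurable_quantileFn_prod]
  exact map_quantileFn

lemma comonotoneCoupling_Iic_prod_Iic (s t : ℝ) :
    comonotoneCoupling μ ν (Iic s ×ˢ Iic t) = min (μ (Iic s)) (ν (Iic t)) := by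
  rw [comonotoneCoupling, Measure.map_apply_of_aemeasurable aemeasurable_quantileFn_prod
    (measurableSet_Iic.prod measurableSet_Iic), Measure.restrict_apply' measurableSet_Ioo,
    mk_preimage_prod, inter_inter_distrib_right, quantileFn_preimage_Iic_inter_Ioo,
    quantileFn_preimage_Iic_inter_Ioo, ← inter_inter_distrib_right, Iic_inter_Iic,
    volume_Iic_inter_Ioo (min_le_of_left_le (cdf_le_one μ s)), ENNReal.ofReal_min,
    ofReal_cdf, ofReal_cdf]

lemma integral_comonotoneCoupling {f : ℝ × ℝ → ℝ}
    (hf : AEStronglyMeasurable f (comonotoneCoupling μ ν)) :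
    ∫ p, f p ∂comonotoneCoupling μ ν = ∫ α in Ioo 0 1, f (quantileFn μ α, quantileFn ν α) :=
  integral_map aemeasurable_quantileFn_prod hf

end Comonotone

section Couplings

variable {α β : Type*} [MeasurableSpace α] [MeasurableSpace β]

lemma measure_prod_le_min_map {π : Measure (α × β)} {s : Set α} {t : Set β}
    (hs : MeasurableSet s) (ht : MeasurableSet t) :
    π (s ×ˢ t) ≤ min (π.map Prod.fst s) (π.map Prod.snd t) := by
  rw [Measure.map_apply measurable_fst hs, Measure.map_apply measurable_snd ht]
  exact le_min (measure_mono (prod_subset_preimage_fst s t))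
    (measure_mono (prod_subset_preimage_snd s t))

lemma integral_indicator_sub_mul_indicator_sub (π : Measure (α × β)) [IsProbabilityMeasure π]
    {s : Set α} {t : Set β} (hs : MeasurableSet s) (ht : MeasurableSet t) (a b : ℝ) :
    ∫ p, (s.indicator 1 p.1 - a) * (t.indicator 1 p.2 - b) ∂π =
      π.real (s ×ˢ t) - b * (π.map Prod.fst).real s - a * (π.map Prod.snd).real t + a * b := by
  have hst : Integrable ((s ×ˢ t).indicator (1 : α × β → ℝ)) π :=
    (integrable_const 1).indicator (hs.prod ht)
  have hs' : Integrable ((Prod.fst ⁻¹' s).indicator (1 : α × β → ℝ)) π :=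
    (integrable_const 1).indicator (measurable_fst hs)
  have ht' : Integrable ((Prod.snd ⁻¹' t).indicator (1 : α × β → ℝ)) π :=
    (integrable_const 1).indicator (measurable_snd ht)
  have hexpand : (fun p : α × β => (s.indicator 1 p.1 - a) * (t.indicator 1 p.2 - b)) =
      fun p => (s ×ˢ t).indicator 1 p - b * (Prod.fst ⁻¹' s).indicator 1 p
        - a * (Prod.snd ⁻¹' t).indicator 1 p + a * b := by
    ext p
    simp only [indicator, mem_prod, mem_preimage, Pi.one_apply]
    split_ifs <;> simp_all <;> ring
  rw [hexpand, integral_add ?_ (integrable_const _), integral_sub ?_ (ht'.const_mul a),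
    integral_sub hst (hs'.const_mul b), integral_const_mul, integral_const_mul,
    integral_indicator_one (hs.prod ht), integral_indicator_one (measurable_fst hs),
    integral_indicator_one (measurable_snd ht), integral_const, probReal_univ, one_smul,
    map_measureReal_apply measurable_fst hs, map_measureReal_apply measurable_snd ht]
  · exact hst.sub (hs'.const_mul b)
  · exact (hst.sub (hs'.const_mul b)).sub (ht'.const_mul a)

end Couplings

section Hoeffding

noncomputable def hoeffdingKernel (s x : ℝ) : ℝ := (Iic s).indicator 1 x - (Iic s).indicator 1 0

lemma measurable_hoeffdingKernel : Measurable (Function.uncurry hoeffdingKernel) := by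
  have h : ∀ f : ℝ × ℝ → ℝ, Measurable f →
      Measurable fun q : ℝ × ℝ => (Iic q.1).indicator (1 : ℝ → ℝ) (f q) := fun f hf =>
    (measurable_const.indicator (measurableSet_le measurable_snd measurable_fst)).comp
      (measurable_fst.prodMk hf)
  exact (h _ measurable_snd).sub (h _ measurable_const)

lemma hoeffdingKernel_eq (x : ℝ) :
    (fun s => hoeffdingKernel s x) = (Ico x 0).indicator 1 - (Ico 0 x).indicator 1 := by
  ext s
  simp only [hoeffdingKernel, indicator, mem_Iic, mem_Ico, Pi.one_apply, Pi.sub_apply]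
  split_ifs <;> grind

lemma abs_hoeffdingKernel_eq (x : ℝ) :
    (fun s => |hoeffdingKernel s x|) = (Ico x 0).indicator 1 + (Ico 0 x).indicator 1 := by
  ext s
  simp only [hoeffdingKernel, indicator, mem_Iic, mem_Ico, Pi.one_apply, Pi.add_apply]
  split_ifs <;> grind

lemma integrable_indicator_Ico_one (a b : ℝ) : Integrable ((Ico a b).indicator (1 : ℝ → ℝ)) :=
  (integrable_indicator_iff measurableSet_Ico).2 (integrableOn_const measure_Ico_lt_top.ne)

lemma integrable_hoeffdingKernel (x : ℝ) : Integrable fun s => hoeffdingKernel s x := by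
  rw [hoeffdingKernel_eq]
  exact (integrable_indicator_Ico_one x 0).sub (integrable_indicator_Ico_one 0 x)

lemma integral_hoeffdingKernel (x : ℝ) : ∫ s, hoeffdingKernel s x = -x := by
  rw [hoeffdingKernel_eq, integral_sub' (integrable_indicator_Ico_one x 0)
    (integrable_indicator_Ico_one 0 x), integral_indicator_one measurableSet_Ico,
    integral_indicator_one measurableSet_Ico, Real.volume_real_Ico, Real.volume_real_Ico,
    zero_sub, sub_zero, ← neg_sub, max_zero_sub_max_neg_zero_eq_self]

lemma integral_abs_hoeffdingKernel (x : ℝ) : ∫ s, |hoeffdingKernel s x| = |x| := by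
  rw [abs_hoeffdingKernel_eq, integral_add' (integrable_indicator_Ico_one x 0)
    (integrable_indicator_Ico_one 0 x), integral_indicator_one measurableSet_Ico,
    integral_indicator_one measurableSet_Ico, Real.volume_real_Ico, Real.volume_real_Ico,
    zero_sub, sub_zero, add_comm, max_zero_add_max_neg_zero_eq_abs_self]

lemma integrable_hoeffding {π : Measure (ℝ × ℝ)} [SFinite π]
    (hπ : Integrable (fun p : ℝ × ℝ => p.1 * p.2) π) :
    Integrable (Function.uncurry fun (p st : ℝ × ℝ) =>
      hoeffdingKernel st.1 p.1 * hoeffdingKernel st.2 p.2) (π.prod (volume.prod volume)) := by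
  have hmeas : Measurable (Function.uncurry fun (p st : ℝ × ℝ) =>
      hoeffdingKernel st.1 p.1 * hoeffdingKernel st.2 p.2) :=
    (measurable_hoeffdingKernel.comp (measurable_snd.fst.prodMk measurable_fst.fst)).mul
      (measurable_hoeffdingKernel.comp (measurable_snd.snd.prodMk measurable_fst.snd))
  refine (integrable_prod_iff hmeas.aestronglyMeasurable).2 ⟨.of_forall fun p =>
    (integrable_hoeffdingKernel p.1).mul_prod (integrable_hoeffdingKernel p.2), ?_⟩
  refine hπ.norm.congr (.of_forall fun p => ?_)
  simp only [Function.uncurry_apply_pair, norm_mul, Real.norm_eq_abs]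
  rw [integral_prod_mul (fun s => |hoeffdingKernel s p.1|) (fun t => |hoeffdingKernel t p.2|),
    integral_abs_hoeffdingKernel, integral_abs_hoeffdingKernel]

lemma integral_fst_mul_snd_eq_integral_hoeffding {π : Measure (ℝ × ℝ)} [SFinite π]
    (hπ : Integrable (fun p : ℝ × ℝ => p.1 * p.2) π) :
    ∫ p, p.1 * p.2 ∂π = ∫ st : ℝ × ℝ,
      ∫ p, hoeffdingKernel st.1 p.1 * hoeffdingKernel st.2 p.2 ∂π ∂(volume.prod volume) := by
  rw [← integral_integral_swap (integrable_hoeffding hπ)]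
  refine integral_congr_ae (.of_forall fun p => ?_)
  dsimp only
  rw [integral_prod_mul (fun s => hoeffdingKernel s p.1) (fun t => hoeffdingKernel t p.2),
    integral_hoeffdingKernel, integral_hoeffdingKernel, neg_mul_neg]

lemma integral_fst_mul_snd_le_of_measure_Iic_prod_le {π π' : Measure (ℝ × ℝ)}
    [IsProbabilityMeasure π] [IsProbabilityMeasure π']
    (hfst : π.map Prod.fst = π'.map Prod.fst) (hsnd : π.map Prod.snd = π'.map Prod.snd)
    (hπ : Integrable (fun p : ℝ × ℝ => p.1 * p.2) π)
    (hπ' : Integrable (fun p : ℝ × ℝ => p.1 * p.2) π')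
    (hle : ∀ s t, π (Iic s ×ˢ Iic t) ≤ π' (Iic s ×ˢ Iic t)) :
    ∫ p, p.1 * p.2 ∂π ≤ ∫ p, p.1 * p.2 ∂π' := by
  rw [integral_fst_mul_snd_eq_integral_hoeffding hπ,
    integral_fst_mul_snd_eq_integral_hoeffding hπ']
  refine integral_mono (integrable_hoeffding hπ).integral_prod_right
    (integrable_hoeffding hπ').integral_prod_right fun st => ?_
  -- only the joint term `π (Iic s ×ˢ Iic t)` of the Hoeffding integrand depends on the coupling
  simp only [hoeffdingKernel]
  rw [integral_indicator_sub_mul_indicator_sub π measurableSet_Iic measurableSet_Iic,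
    integral_indicator_sub_mul_indicator_sub π' measurableSet_Iic measurableSet_Iic, hfst, hsnd]
  gcongr
  exact ENNReal.toReal_mono (measure_ne_top π' _) (hle st.1 st.2)

end Hoeffding

section SecondMoment

variable {π : Measure (ℝ × ℝ)}

lemma integrable_fst_mul_snd (h₁ : MemLp (fun x => x) 2 (π.map Prod.fst))
    (h₂ : MemLp (fun x => x) 2 (π.map Prod.snd)) : Integrable (fun p : ℝ × ℝ => p.1 * p.2) π :=
  (h₁.comp_of_map measurable_fst.aemeasurable).integrable_mul
    (h₂.comp_of_map measurable_snd.aemeasurable)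

lemma integral_sub_sq_eq (h₁ : MemLp (fun x => x) 2 (π.map Prod.fst))
    (h₂ : MemLp (fun x => x) 2 (π.map Prod.snd)) :
    ∫ p, (p.1 - p.2) ^ 2 ∂π =
      ∫ x, x ^ 2 ∂π.map Prod.fst + ∫ x, x ^ 2 ∂π.map Prod.snd - 2 * ∫ p, p.1 * p.2 ∂π := by
  have hX : Integrable (fun p : ℝ × ℝ => p.1 ^ 2) π :=
    (h₁.comp_of_map measurable_fst.aemeasurable).integrable_sq
  have hY : Integrable (fun p : ℝ × ℝ => p.2 ^ 2) π :=
    (h₂.comp_of_map measurable_snd.aemeasurable).integrable_sq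
  rw [integral_map measurable_fst.aemeasurable (continuous_pow 2).aestronglyMeasurable,
    integral_map measurable_snd.aemeasurable (continuous_pow 2).aestronglyMeasurable,
    ← integral_add hX hY, ← integral_const_mul,
    ← integral_sub ?_ ((integrable_fst_mul_snd h₁ h₂).const_mul 2)]
  · exact integral_congr_ae (.of_forall fun p => by ring)
  · exact hX.add hY

end SecondMoment

end QuantileCoupling

open QuantileCoupling

/-- For probability measures `μ, ν` on `ℝ` with finite second moments, the minimal
value of `E[(X − Y)²]` over all couplings of `(μ, ν)` exists and equals
`∫₀¹ (Q_μ(α) − Q_ν(α))² dα` (one-dimensional optimal transport with quadratic cost,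
achieved by the comonotone coupling). -/
theorem stmt12 (μ ν : Measure ℝ) [IsProbabilityMeasure μ] [IsProbabilityMeasure ν]
    (hμ : MemLp (fun x => x) 2 μ) (hν : MemLp (fun x => x) 2 ν) :
    IsLeast
      {c : ℝ | ∃ π : Measure (ℝ × ℝ), IsProbabilityMeasure π ∧
        π.map Prod.fst = μ ∧ π.map Prod.snd = ν ∧
        c = ∫ p : ℝ × ℝ, (p.1 - p.2) ^ 2 ∂π}
      (∫ α in Ioc (0 : ℝ) 1, (quantileFn μ α - quantileFn ν α) ^ 2) := by
  set π₀ := comonotoneCoupling μ ν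
  have h₀fst : π₀.map Prod.fst = μ := comonotoneCoupling_map_fst
  have h₀snd : π₀.map Prod.snd = ν := comonotoneCoupling_map_snd
  have hcost :
      ∫ p, (p.1 - p.2) ^ 2 ∂π₀ = ∫ α in Ioc 0 1, (quantileFn μ α - quantileFn ν α) ^ 2 := by
    rw [integral_comonotoneCoupling (by fun_prop), integral_Ioc_eq_integral_Ioo]
  refine ⟨⟨π₀, inferInstance, h₀fst, h₀snd, hcost.symm⟩, ?_⟩
  rintro _ ⟨π, hπ, hfst, hsnd, rfl⟩
  have h₁ : MemLp (fun x => x) 2 (π.map Prod.fst) := hfst ▸ hμ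
  have h₂ : MemLp (fun x => x) 2 (π.map Prod.snd) := hsnd ▸ hν
  have h₀₁ : MemLp (fun x => x) 2 (π₀.map Prod.fst) := h₀fst ▸ hμ
  have h₀₂ : MemLp (fun x => x) 2 (π₀.map Prod.snd) := h₀snd ▸ hν
  have hcorr : ∫ p, p.1 * p.2 ∂π ≤ ∫ p, p.1 * p.2 ∂π₀ :=
    integral_fst_mul_snd_le_of_measure_Iic_prod_le (hfst.trans h₀fst.symm)
      (hsnd.trans h₀snd.symm) (integrable_fst_mul_snd h₁ h₂) (integrable_fst_mul_snd h₀₁ h₀₂)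
      fun s t => (measure_prod_le_min_map measurableSet_Iic measurableSet_Iic).trans_eq <| by
        rw [hfst, hsnd, comonotoneCoupling_Iic_prod_Iic]
  rw [← hcost, integral_sub_sq_eq h₁ h₂, integral_sub_sq_eq h₀₁ h₀₂, hfst, hsnd, h₀fst, h₀snd]
  linarith
end
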